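/- Let W₀ →_{ρ₁} ⋯ →_{ρ_l} W_l be a reduced computation of 𝓜 with base k₁q₂k₂ in which every rule ρ_j is of age (1) or (6) (resp. every rule is of age (2) or (5)). Then there exists an integer d with 0 ≤ d ≤ l such that |W₀| > |W₁| > ⋯ > |W_d| (resp. |W₀| ≥ |W₁| ≥ ⋯ ≥ |W_d|) and |W_d| < |W_{d+1}| < ⋯ < |W_l| (resp. |W_d| ≤ |W_{d+1}| ≤ ⋯ ≤ |W_l|). -/

import Mathlib

set_option maxHeartbeats 1000000

namespace SM

/-! ### Generic S-machine framework

Words are lists of (letter, sign) pairs; `true` is a positive occurrence.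
An S-machine has state letters (`Q`) and tape letters (`Y`).  Each state
letter has a sector index on its left (`ls`) and on its right (`rs`);
sector `s` carries the tape alphabet `inY s`. -/

abbrev Wrd (Y : Type) := List (Y × Bool)

def wInv {Y : Type} (w : Wrd Y) : Wrd Y := w.reverse.map fun x => (x.1, !x.2)

def IsReduced {Y : Type} (w : Wrd Y) : Prop :=
  List.Chain' (fun a b => ¬ (b.1 = a.1 ∧ b.2 = !a.2)) w

structure Machine (Q Y : Type) where
  ls : Q → ℕ
  rs : Q → ℕ
  inY : ℕ → Y → Prop

/-- A rule replaces each state letter `q` in its domain by a word `u q' v`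
(`act q = some (u, q', v)`), and carries the subsets `Y_i(θ)` (`ys`). -/
structure Rule (Q Y : Type) where
  act : Q → Option (Wrd Y × Q × Wrd Y)
  ys : ℕ → Y → Prop

/-- Sector to the right of an occurrence of a state letter. -/
def secR {Q Y : Type} (M : Machine Q Y) (x : Q × Bool) : ℕ :=
  if x.2 then M.rs x.1 else M.ls x.1

/-- Sector to the left of an occurrence of a state letter. -/
def secL {Q Y : Type} (M : Machine Q Y) (x : Q × Bool) : ℕ :=
  if x.2 then M.ls x.1 else M.rs x.1

def qd {Q : Type} [Inhabited Q] (l : List (Q × Bool)) (j : ℕ) : Q × Bool :=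
  l.getD j (default, true)

/-- An admissible word: state-letter occurrences `qs` (the base) alternating
with reduced tape words `tapes`, with consistent sectors, each tape word
over the alphabet of its sector, and the whole word freely reduced. -/
structure AdmWord {Q Y : Type} [Inhabited Q] (M : Machine Q Y) where
  qs : List (Q × Bool)
  tapes : List (Wrd Y)
  qs_ne : qs ≠ []
  hlen : tapes.length + 1 = qs.length
  consist : ∀ j, j + 1 < qs.length → secR M (qd qs j) = secL M (qd qs (j + 1))
  alph : ∀ j, j + 1 < qs.length → ∀ x ∈ tapes.getD j [], M.inY (secR M (qd qs j)) x.1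
  tred : ∀ j, IsReduced (tapes.getD j [])
  qred : ∀ j, j + 1 < qs.length → (qd qs (j + 1)).1 = (qd qs j).1 →
      (qd qs (j + 1)).2 = !(qd qs j).2 → tapes.getD j [] ≠ []

/-- `|W|_a` : the number of tape letters of `W`. -/
def alen {Q Y : Type} [Inhabited Q] {M : Machine Q Y} (W : AdmWord M) : ℕ :=
  (W.tapes.map List.length).sum

/-- `|W|` : the length of `W`. -/
def wlen {Q Y : Type} [Inhabited Q] {M : Machine Q Y} (W : AdmWord M) : ℕ :=
  W.qs.length + alen W

/-- Replacement of a single (signed) state-letter occurrence by a rule. -/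
def occRepl {Q Y : Type} (r : Rule Q Y) : Q × Bool → Option (Wrd Y × (Q × Bool) × Wrd Y)
  | (q, true) => (r.act q).map fun x => (x.1, (x.2.1, true), x.2.2)
  | (q, false) => (r.act q).map fun x => (wInv x.2.2, (x.2.1, false), wInv x.1)

/-- `Step M r W W'` : the rule `r` is applicable to `W` and `W' = r · W`. -/
def Step {Q Y : Type} [Inhabited Q] (M : Machine Q Y) (r : Rule Q Y)
    (W W' : AdmWord M) : Prop :=
  W.qs.length = W'.qs.length ∧
  (∀ j, j + 1 < W.qs.length → ∀ x ∈ W.tapes.getD j [], r.ys (secR M (qd W.qs j)) x.1) ∧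
  (∀ j, j < W.qs.length → ∃ u v, occRepl r (qd W.qs j) = some (u, qd W'.qs j, v)) ∧
  (∀ j, j + 1 < W.qs.length → ∀ u v u' v',
    occRepl r (qd W.qs j) = some (u, qd W'.qs j, v) →
    occRepl r (qd W.qs (j + 1)) = some (u', qd W'.qs (j + 1), v') →
    FreeGroup.mk (W'.tapes.getD j []) = FreeGroup.mk (v ++ W.tapes.getD j [] ++ u'))

/-! ### The machine `Z(A)`

State letters `L, p(1), p(2), p(3), R`; sector `0` is the `Lp`-sector with
alphabet `A₀ ∪ A₁`, sector `1` is the `pR`-sector with alphabet `A₀`.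
A tape letter is a pair `(a, i)` with `i = false` for `a₀ ∈ A₀` and
`i = true` for `a₁ ∈ A₁`. -/

inductive ZQ
  | L | p1 | p2 | p3 | R
deriving DecidableEq, Inhabited

abbrev ZY (A : Type) := A × Bool

def ZM (A : Type) : Machine ZQ (ZY A) where
  ls := fun q => match q with | .L => 9 | .R => 1 | _ => 0
  rs := fun q => match q with | .L => 0 | .R => 9 | _ => 1
  inY := fun s y => s = 0 ∨ (s = 1 ∧ y.2 = false)

inductive ZRulN (A : Type)
  | r1 (a : A) | r12 (a : A) | r2 (a : A) | r21 | r13 | r3 (a : A)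
deriving DecidableEq

/-- A rule of `Z(A)`: a rule name together with an inversion flag. -/
abbrev ZRul (A : Type) := ZRulN A × Bool

def zinv (A : Type) : ZRul A → ZRul A := fun x => (x.1, !x.2)

/-- Action of the positive rules of `Z(A)` on state letters. -/
def zactN (A : Type) : ZRulN A → ZQ → Option (Wrd (ZY A) × ZQ × Wrd (ZY A))
  | _, .L => some ([], .L, [])
  | _, .R => some ([], .R, [])
  | .r1 a, .p1 => some ([((a, true), false)], .p1, [((a, false), true)])
  | .r12 a, .p1 => some ([((a, false), false), ((a, true), true)], .p2, [])
  | .r2 a, .p2 => some ([((a, false), true)], .p2, [((a, false), false)])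
  | .r21, .p2 => some ([], .p1, [])
  | .r13, .p1 => some ([], .p3, [])
  | .r3 a, .p3 => some ([((a, false), true)], .p3, [((a, false), false)])
  | _, _ => none

/-- Action of the rules of `Z(A)` (including inverse rules). -/
def zact (A : Type) : ZRul A → ZQ → Option (Wrd (ZY A) × ZQ × Wrd (ZY A))
  | (n, false), q => zactN A n q
  | (_, true), .L => some ([], .L, [])
  | (_, true), .R => some ([], .R, [])
  | (.r1 a, true), .p1 => some ([((a, true), true)], .p1, [((a, false), false)])
  | (.r12 a, true), .p2 => some ([((a, true), false), ((a, false), true)], .p1, [])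
  | (.r2 a, true), .p2 => some ([((a, false), false)], .p2, [((a, false), true)])
  | (.r21, true), .p1 => some ([], .p2, [])
  | (.r13, true), .p3 => some ([], .p1, [])
  | (.r3 a, true), .p3 => some ([((a, false), false)], .p3, [((a, false), true)])
  | (_, true), _ => none

/-- The sets `Y_i(θ)` of the rules of `Z(A)`. -/
def zysN (A : Type) : ZRulN A → ℕ → ZY A → Prop
  | .r21, s, _ => s = 0
  | .r13, s, y => s = 1 ∧ y.2 = false
  | .r3 _, s, y => (s = 0 ∨ s = 1) ∧ y.2 = false
  | _, s, y => s = 0 ∨ (s = 1 ∧ y.2 = false)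

def zys (A : Type) (r : ZRul A) : ℕ → ZY A → Prop := zysN A r.1

def zrule (A : Type) (r : ZRul A) : Rule ZQ (ZY A) := ⟨zact A r, zys A r⟩

/-- A reduced computation of the machine `Z(A)`:
`W 0 →_{h 0} W 1 →_{h 1} ⋯ →_{h (t-1)} W t` with freely reduced history. -/
structure ZComp (A : Type) where
  t : ℕ
  W : ℕ → AdmWord (ZM A)
  h : ℕ → ZRul A
  steps : ∀ i, i < t → Step (ZM A) (zrule A (h i)) (W i) (W (i + 1))
  red : ∀ i, i + 1 < t → h (i + 1) ≠ zinv A (h i)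

def isP (q : ZQ) : Prop := q = .p1 ∨ q = .p2 ∨ q = .p3

def baseLpR {A : Type} (W : AdmWord (ZM A)) : Prop :=
  ∃ p, isP p ∧ W.qs = [(ZQ.L, true), (p, true), (ZQ.R, true)]

def baseIPR {A : Type} (W : AdmWord (ZM A)) : Prop :=
  ∃ p p', isP p ∧ isP p' ∧ W.qs = [(p, false), (p', true), (ZQ.R, true)]

/-- For a three-letter base ending with `R`: `W` contains the subword `st·R`. -/
def hasPR {A : Type} (W : AdmWord (ZM A)) (st : ZQ) : Prop :=
  qd W.qs 1 = (st, true) ∧ W.tapes.getD 1 [] = []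

/-- All tape letters of `W` lie in `A₀^{±1}`. -/
def allA0 {A : Type} (W : AdmWord (ZM A)) : Prop :=
  ∀ j, ∀ x ∈ W.tapes.getD j [], x.1.2 = false

/-- `u` is a positive word over `A₀`. -/
def Pos0 {A : Type} (u : Wrd (ZY A)) : Prop :=
  ∀ x ∈ u, x.2 = true ∧ x.1.2 = false

/-- Projection of a tape word onto `A` (sending `a₀, a₁` to `a`). -/
def projA {A : Type} (w : Wrd (ZY A)) : Wrd A := w.map fun x => (x.1.1, x.2)

/-! ### The machine `𝓜`

Five state letters in the cyclic order `k₀, q₁, k₁, q₂, k₂`.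
Sectors: `0 = k₀q₁` (alphabet `{a₀, a₁}`), `1 = q₁k₁` (alphabet `{a₀}`),
`2 = k₁q₂` (alphabet `A(Υ)₀`), `3 = q₂k₂` (alphabet `A(Υ)₀ ∪ A(Υ)₁`),
`4 = k₂k₀` (empty alphabet), where `Υ` is the set of rules of `Z({a})`.

`q1Z st ag` is the state `q₁(st)^{ag}` (with `ag ∈ {1,2,5,6}`, `st ∈ {1,2,3}`),
`q1M ag` is `q₁^{ag}` (`ag ∈ {3,4}`), `q2M st ag` is `q₂(st)^{ag}` (`ag ∈ {3,4}`),
`q2Z ag` is `q₂^{ag}` (`ag ∈ {1,2,5,6}`). -/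

inductive MQ
  | k0 | k1 | k2
  | q1Z (st : ℕ) (ag : ℕ)
  | q1M (ag : ℕ)
  | q2M (st : ℕ) (ag : ℕ)
  | q2Z (ag : ℕ)
deriving DecidableEq, Inhabited

/-- Tape letters of `𝓜`: `sa i` is `a_i` (`a₀`/`a₁`); `su τ i` is the copy
of the letter `a_τ` (`τ ∈ Υ`) in `A(Υ)_i`. -/
inductive MY
  | sa (i : Bool)
  | su (r : ZRul Unit) (i : Bool)
deriving DecidableEq

def MM : Machine MQ MY where
  ls := fun q => match q with
    | .k0 => 4 | .k1 => 1 | .k2 => 3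
    | .q1Z _ _ => 0 | .q1M _ => 0
    | .q2M _ _ => 2 | .q2Z _ => 2
  rs := fun q => match q with
    | .k0 => 0 | .k1 => 2 | .k2 => 4
    | .q1Z _ _ => 1 | .q1M _ => 1
    | .q2M _ _ => 3 | .q2Z _ => 3
  inY := fun s y => match y with
    | .sa i => s = 0 ∨ (s = 1 ∧ i = false)
    | .su _ i => (s = 2 ∧ i = false) ∨ s = 3

/-- Rules of `𝓜`.  `ag1 τ b` is `(τ¹)^{±1}` (`b` the inversion flag), etc.
For ages (3), (4) the inverse of `τ³` is `(τ⁻¹)³`, so no flag is needed.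
`c12 b, …` are the connecting rules `(r¹²)^{±1}, …`. -/
inductive MRul
  | ag1 (τ : ZRul Unit) (b : Bool)
  | ag2 (τ : ZRul Unit) (b : Bool)
  | ag5 (τ : ZRul Unit) (b : Bool)
  | ag6 (τ : ZRul Unit) (b : Bool)
  | ag3 (τ : ZRul (ZRul Unit))
  | ag4 (τ : ZRul (ZRul Unit))
  | c12 (b : Bool)
  | c23 (b : Bool)
  | c34 (b : Bool)
  | c45 (b : Bool)
  | c56 (b : Bool)
deriving DecidableEq

def minv : MRul → MRul
  | .ag1 τ b => .ag1 τ (!b)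
  | .ag2 τ b => .ag2 τ (!b)
  | .ag5 τ b => .ag5 τ (!b)
  | .ag6 τ b => .ag6 τ (!b)
  | .ag3 τ => .ag3 (zinv _ τ)
  | .ag4 τ => .ag4 (zinv _ τ)
  | .c12 b => .c12 (!b)
  | .c23 b => .c23 (!b)
  | .c34 b => .c34 (!b)
  | .c45 b => .c45 (!b)
  | .c56 b => .c56 (!b)

def pOf : ℕ → ZQ
  | 1 => .p1 | 2 => .p2 | 3 => .p3 | _ => .R

def stOf : ZQ → Option ℕ
  | .p1 => some 1 | .p2 => some 2 | .p3 => some 3 | _ => none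

def cva (x : (Unit × Bool) × Bool) : MY × Bool := (.sa x.1.2, x.2)

def cvu (x : (ZRul Unit × Bool) × Bool) : MY × Bool := (.su x.1.1 x.1.2, x.2)

/-- A rule `τ` of `Z({a})` acting on `(k₀, q₁, k₁)` exactly as `τ` acts on
`(L, p, R)`, the states of `q₁` carrying the age tag `ag`. -/
def leftAct (τ : ZRul Unit) (ag : ℕ) : MQ → Option (Wrd MY × MQ × Wrd MY)
  | .k0 => some ([], .k0, [])
  | .k1 => some ([], .k1, [])
  | .q1Z st ag' =>
      if ag' = ag then
        match zact Unit τ (pOf st) with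
        | some x =>
            match stOf x.2.1 with
            | some st' => some (x.1.map cva, .q1Z st' ag, x.2.2.map cva)
            | none => none
        | none => none
      else none
  | _ => none

/-- The mirror version of the action of a rule of `Z(B)`. -/
def zmirAct (B : Type) (τ : ZRul B) (q : ZQ) : Option (Wrd (ZY B) × ZQ × Wrd (ZY B)) :=
  (zact B τ q).map fun x => (x.2.2.reverse, x.2.1, x.1.reverse)

/-- The sets `Y_i(θ)` for the mirror machine `Z(B, mir)`
(sector `0` has alphabet `B₀`, sector `1` has alphabet `B₀ ∪ B₁`). -/
def zmirYs (B : Type) (τ : ZRul B) (s : ℕ) (y : ZY B) : Prop :=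
  match τ.1 with
  | .r21 => s = 1
  | .r13 => s = 0 ∧ y.2 = false
  | .r3 _ => (s = 0 ∨ s = 1) ∧ y.2 = false
  | _ => (s = 0 ∧ y.2 = false) ∨ s = 1

/-- A rule `τ` of `Z(A(Υ), mir)` acting on `(k₁, q₂, k₂)` exactly as `τ` acts
on `(L, p, R)`, leaving `k₀` and `q₁^{ag}` unchanged. -/
def rightAct (τ : ZRul (ZRul Unit)) (ag : ℕ) : MQ → Option (Wrd MY × MQ × Wrd MY)
  | .k0 => some ([], .k0, [])
  | .k1 => some ([], .k1, [])
  | .k2 => some ([], .k2, [])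
  | .q1M ag' => if ag' = ag then some ([], .q1M ag, []) else none
  | .q2M st ag' =>
      if ag' = ag then
        match zmirAct (ZRul Unit) τ (pOf st) with
        | some x =>
            match stOf x.2.1 with
            | some st' => some (x.1.map cvu, .q2M st' ag, x.2.2.map cvu)
            | none => none
        | none => none
      else none
  | _ => none

/-- Action of a connecting rule (`b` is the inversion flag): `k`-letters are
unchanged, `x ↦ x'` and `y ↦ y'` are the state changes of `q₁` and `q₂`. -/
def connAct (b : Bool) (x x' y y' : MQ) (q : MQ) : Option (Wrd MY × MQ × Wrd MY) :=
  if q = .k0 ∨ q = .k1 ∨ q = .k2 then some ([], q, [])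
  else if q = cond b x' x then some ([], cond b x x', [])
  else if q = cond b y' y then some ([], cond b y y', [])
  else none

def mact : MRul → MQ → Option (Wrd MY × MQ × Wrd MY)
  | .ag1 τ b, .q2Z 1 => some ([(.su τ false, !b)], .q2Z 1, [])
  | .ag1 _ _, .k2 => some ([], .k2, [])
  | .ag1 τ b, q => leftAct (cond b (zinv Unit τ) τ) 1 q
  | .ag2 τ b, .q2Z 2 => some ([(.su τ false, !b)], .q2Z 2, [(.su τ false, b)])
  | .ag2 _ _, .k2 => some ([], .k2, [])
  | .ag2 τ b, q => leftAct (cond b (zinv Unit τ) τ) 2 q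
  | .ag5 τ b, .q2Z 5 => some ([(.su τ false, b)], .q2Z 5, [(.su τ false, !b)])
  | .ag5 _ _, .k2 => some ([], .k2, [])
  | .ag5 τ b, q => leftAct (cond b (zinv Unit τ) τ) 5 q
  | .ag6 τ b, .q2Z 6 => some ([], .q2Z 6, [(.su τ false, !b)])
  | .ag6 _ _, .k2 => some ([], .k2, [])
  | .ag6 τ b, q => leftAct (cond b (zinv Unit τ) τ) 6 q
  | .ag3 τ, q => rightAct τ 3 q
  | .ag4 τ, q => rightAct τ 4 q
  | .c12 b, q => connAct b (.q1Z 3 1) (.q1Z 3 2) (.q2Z 1) (.q2Z 2) q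
  | .c23 b, q => connAct b (.q1Z 1 2) (.q1M 3) (.q2Z 2) (.q2M 1 3) q
  | .c34 b, q => connAct b (.q1M 3) (.q1M 4) (.q2M 3 3) (.q2M 3 4) q
  | .c45 b, q => connAct b (.q1M 4) (.q1Z 1 5) (.q2M 1 4) (.q2Z 5) q
  | .c56 b, q => connAct b (.q1Z 3 5) (.q1Z 3 6) (.q2Z 5) (.q2Z 6) q

def mys : MRul → ℕ → MY → Prop
  | .ag1 τ _, s, .sa i => zys Unit τ s ((), i)
  | .ag1 _ _, s, .su _ i => s = 2 ∧ i = false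
  | .ag2 τ _, s, .sa i => zys Unit τ s ((), i)
  | .ag2 _ _, s, .su _ i => (s = 2 ∨ s = 3) ∧ i = false
  | .ag5 τ _, s, .sa i => zys Unit τ s ((), i)
  | .ag5 _ _, s, .su _ i => (s = 2 ∨ s = 3) ∧ i = false
  | .ag6 τ _, s, .sa i => zys Unit τ s ((), i)
  | .ag6 _ _, s, .su _ i => s = 3 ∧ i = false
  | .ag3 τ, s, .sa i => s = 0 ∧ i = false
  | .ag3 τ, s, .su r i => (s = 2 ∧ zmirYs (ZRul Unit) τ 0 (r, i)) ∨
      (s = 3 ∧ zmirYs (ZRul Unit) τ 1 (r, i))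
  | .ag4 τ, s, .sa i => s = 0 ∧ i = false
  | .ag4 τ, s, .su r i => (s = 2 ∧ zmirYs (ZRul Unit) τ 0 (r, i)) ∨
      (s = 3 ∧ zmirYs (ZRul Unit) τ 1 (r, i))
  | .c12 _, s, .sa i => s = 0 ∧ i = false
  | .c12 _, s, .su _ i => s = 2 ∧ i = false
  | .c23 _, s, .sa i => s = 0 ∧ i = false
  | .c23 _, s, .su _ i => s = 3 ∧ i = false
  | .c34 _, s, .sa i => s = 0 ∧ i = false
  | .c34 _, s, .su _ i => s = 3 ∧ i = false
  | .c45 _, s, .sa i => s = 0 ∧ i = false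
  | .c45 _, s, .su _ i => s = 3 ∧ i = false
  | .c56 _, s, .sa i => s = 0 ∧ i = false
  | .c56 _, s, .su _ i => s = 2 ∧ i = false

def mrule (r : MRul) : Rule MQ MY := ⟨mact r, mys r⟩

/-- A reduced computation of the machine `𝓜`. -/
structure MComp where
  t : ℕ
  W : ℕ → AdmWord MM
  h : ℕ → MRul
  steps : ∀ i, i < t → Step MM (mrule (h i)) (W i) (W (i + 1))
  red : ∀ i, i + 1 < t → h (i + 1) ≠ minv (h i)

inductive Age
  | a1 | a12 | a2 | a23 | a3 | a34 | a4 | a45 | a5 | a56 | a6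
deriving DecidableEq

def age : MRul → Age
  | .ag1 _ _ => .a1
  | .ag2 _ _ => .a2
  | .ag5 _ _ => .a5
  | .ag6 _ _ => .a6
  | .ag3 _ => .a3
  | .ag4 _ => .a4
  | .c12 _ => .a12
  | .c23 _ => .a23
  | .c34 _ => .a34
  | .c45 _ => .a45
  | .c56 _ => .a56

def IsConn (r : MRul) : Prop :=
  age r = .a12 ∨ age r = .a23 ∨ age r = .a34 ∨ age r = .a45 ∨ age r = .a56

def hist (c : MComp) : List MRul := (List.range c.t).map c.h

/-- The brief history of a history: each maximal block of consecutive rules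
of the same age is replaced by that age symbol. -/
def briefOf (l : List MRul) : List Age := (l.map age).destutter (· ≠ ·)

def brief (c : MComp) : List Age := briefOf (hist c)

def longWord : List Age :=
  [.a1, .a12, .a2, .a23, .a3, .a34, .a4, .a45, .a5, .a56, .a6]

/-- A computation is long if the brief history of the computation or of the
inverse computation contains `(1)(12)(2)(23)(3)(34)(4)(45)(5)(56)(6)`. -/
def IsLong (c : MComp) : Prop :=
  longWord <:+: brief c ∨ longWord <:+: briefOf ((hist c).reverse.map minv)

def isKb : MQ → Bool
  | .k0 => true | .k1 => true | .k2 => true | _ => false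

def isQ1b : MQ → Bool
  | .q1Z _ _ => true | .q1M _ => true | _ => false

def isQ2b : MQ → Bool
  | .q2Z _ => true | .q2M _ _ => true | _ => false

def isQb (q : MQ) : Bool := isQ1b q || isQ2b q

/-- `x` and `y` are states of the same `q`-letter (both `q₁` or both `q₂`). -/
def famEqb (x y : MQ) : Bool := (isQ1b x && isQ1b y) || (isQ2b x && isQ2b y)

/-- The width `‖W‖` of an admissible word: `3 + |u| + 2|v|` for words of the
form `q⁻¹uqvk` or `kvquq⁻¹`, and `|W|` otherwise. -/
def mwidth (W : AdmWord MM) : ℕ :=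
  match W.qs, W.tapes with
  | [(x, false), (y, true), (z, true)], [u, v] =>
      if famEqb x y && isKb z then 3 + u.length + 2 * v.length else wlen W
  | [(z, true), (y, true), (x, false)], [v, u] =>
      if isKb z && famEqb y x then 3 + u.length + 2 * v.length else wlen W
  | _, _ => wlen W

/- base patterns -/

def bKQQ (W : AdmWord MM) : Prop :=
  ∃ k x y, isKb k ∧ famEqb x y ∧ W.qs = [(k, true), (x, true), (y, false)]

def bQQQ (W : AdmWord MM) : Prop :=
  ∃ x y z, famEqb x y ∧ famEqb y z ∧ W.qs = [(x, true), (y, false), (z, true)]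

def bKQK (W : AdmWord MM) : Prop :=
  ∃ k x k', isKb k ∧ isQb x ∧ isKb k' ∧ W.qs = [(k, true), (x, true), (k', true)]

def bQQK (W : AdmWord MM) : Prop :=
  ∃ x y k, famEqb x y ∧ isKb k ∧ W.qs = [(x, false), (y, true), (k, true)]

def bKK (W : AdmWord MM) : Prop :=
  ∃ k, isKb k ∧ W.qs = [(k, false), (k, true)]

def bKKi (W : AdmWord MM) : Prop :=
  ∃ k, isKb k ∧ W.qs = [(k, true), (k, false)]

def bK2K0 (W : AdmWord MM) : Prop := W.qs = [(MQ.k2, true), (MQ.k0, true)]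

def base7 (W : AdmWord MM) : Prop :=
  bKQQ W ∨ bKK W ∨ bQQQ W ∨ bKQK W ∨ bQQK W ∨ bKKi W ∨ bK2K0 W

def base6 (W : AdmWord MM) : Prop :=
  bKQQ W ∨ bKK W ∨ bQQQ W ∨ bKQK W ∨ bQQK W ∨ bKKi W

/-- Bases `k₀q₁k₁q₂k₂`, `k₁q₂k₂k₀q₁k₁`, `k₂k₀q₁k₁q₂k₂`. -/
def bigBase (W : AdmWord MM) : Prop :=
  (∃ x y, isQ1b x ∧ isQ2b y ∧
    W.qs = [(MQ.k0, true), (x, true), (MQ.k1, true), (y, true), (MQ.k2, true)]) ∨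
  (∃ x y, isQ2b x ∧ isQ1b y ∧
    W.qs = [(MQ.k1, true), (x, true), (MQ.k2, true), (MQ.k0, true), (y, true), (MQ.k1, true)]) ∨
  (∃ x y, isQ1b x ∧ isQ2b y ∧
    W.qs = [(MQ.k2, true), (MQ.k0, true), (x, true), (MQ.k1, true), (y, true), (MQ.k2, true)])

/-- The number of tape letters of `W` in the sectors `k₀q₁` and `q₁k₁`
(the restriction of `W` to the subbase `k₀q₁k₁`). -/
def alenLo (W : AdmWord MM) : ℕ :=
  ((List.range W.tapes.length).map fun j =>
    if secR MM (qd W.qs j) < 2 then (W.tapes.getD j []).length else 0).sum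

/-- The number of tape letters of `W` in the sectors `k₁q₂` and `q₂k₂`
(the restriction of `W` to the subbase `k₁q₂k₂`). -/
def alenHi (W : AdmWord MM) : ℕ :=
  ((List.range W.tapes.length).map fun j =>
    if 2 ≤ secR MM (qd W.qs j) ∧ secR MM (qd W.qs j) < 4
    then (W.tapes.getD j []).length else 0).sum

/-- Base of the form `k…k` where the first and the last `k`-letters coincide. -/
def baseKK (W : AdmWord MM) : Prop :=
  2 ≤ W.qs.length ∧ ∃ k, isKb k ∧ W.qs.head? = some (k, true) ∧
    W.qs.getLast? = some (k, true)

def noQQQ (W : AdmWord MM) : Prop :=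
  ¬ ∃ (x y z : MQ) (e : Bool), famEqb x y ∧ famEqb y z ∧
    [(x, e), (y, !e), (z, e)] <:+: W.qs

def noProperKK (W : AdmWord MM) : Prop :=
  ¬ ∃ u : List (MQ × Bool), u <:+: W.qs ∧ u ≠ W.qs ∧ 2 ≤ u.length ∧
    (∃ k, isKb k ∧ u.head? = some (k, true)) ∧
    (∃ k, isKb k ∧ u.getLast? = some (k, true))

def baseA (W : AdmWord MM) : Prop := baseKK W ∧ noQQQ W ∧ noProperKK W

/-- `gSpec n t` : there is a reduced computation of `Z({a})` of length `t`
with base `LpR` from `L a₀ⁿ p(1) R` to `L a₀ⁿ p(3) R`. -/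
def gSpec (n t : ℕ) : Prop :=
  ∃ c : ZComp Unit, c.t = t ∧
    (c.W 0).qs = [(ZQ.L, true), (ZQ.p1, true), (ZQ.R, true)] ∧
    (c.W 0).tapes = [List.replicate n (((), false), true), []] ∧
    (c.W c.t).qs = [(ZQ.L, true), (ZQ.p3, true), (ZQ.R, true)] ∧
    (c.W c.t).tapes = [List.replicate n (((), false), true), []]

/-- `g n` : the common length of the computations of `Z({a})` from
`L a₀ⁿ p(1) R` to `L a₀ⁿ p(3) R`. -/
noncomputable def g (n : ℕ) : ℕ := sInf {t | gSpec n t}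

noncomputable def log' (x : ℝ) : ℝ := max (Real.logb 2 x) 1

end SM

/-!
On the base `k₁q₂k₂` a rule of age (1), (2), (5) or (6) acts only if `q₂` is in the state of
that age, it does not change that state, and it multiplies the two tape words by a single letter
`a_τ^{±1}`: age (1) writes on the `k₁q₂`-side, age (6) on the `q₂k₂`-side, ages (2) and (5) write
`a_τ^{±1}` on one side and its inverse on the other. A reduced word that is multiplied on a fixed
side by one letter per step, two consecutive letters never cancelling (the history is reduced),
first loses one letter per step and, once it has grown, keeps growing by one letter per step. So
each tape length is a "unit valley"; with one moving tape this gives the strict statement, and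
the sum of two unit valleys is non-increasing up to the later turning point and non-decreasing
after it.
-/

section Valley

variable {f g k : ℕ → ℕ} {t : ℕ}

def StrictValley (f : ℕ → ℕ) (t : ℕ) : Prop :=
  ∃ d, d ≤ t ∧ (∀ i < d, f (i + 1) < f i) ∧ ∀ i, d ≤ i → i < t → f i < f (i + 1)

def Valley (f : ℕ → ℕ) (t : ℕ) : Prop :=
  ∃ d, d ≤ t ∧ (∀ i < d, f (i + 1) ≤ f i) ∧ ∀ i, d ≤ i → i < t → f i ≤ f (i + 1)

def UnitValley (f : ℕ → ℕ) (t : ℕ) : Prop :=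
  ∃ d, d ≤ t ∧ (∀ i < d, f (i + 1) + 1 = f i) ∧ ∀ i, d ≤ i → i < t → f (i + 1) = f i + 1

theorem unitValley_of_step_of_grow
    (hstep : ∀ i < t, f (i + 1) + 1 = f i ∨ f (i + 1) = f i + 1)
    (hgrow : ∀ i, i + 1 < t → f (i + 1) = f i + 1 → f (i + 2) = f (i + 1) + 1) :
    UnitValley f t := by
  classical
  by_cases hex : ∃ i < t, f (i + 1) = f i + 1
  · refine ⟨Nat.find hex, (Nat.find_spec hex).1.le, fun i hi => ?_, fun i hdi hit => ?_⟩
    · have hit : i < t := hi.trans (Nat.find_spec hex).1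
      exact (hstep i hit).resolve_right fun h => Nat.find_min hex hi ⟨hit, h⟩
    · induction i, hdi using Nat.le_induction with
      | base => exact (Nat.find_spec hex).2
      | succ n _ ih => exact hgrow n hit (ih (by omega))
  · push Not at hex
    exact ⟨t, le_rfl, fun i hi => (hstep i hi).resolve_right (hex i hi), by omega⟩

theorem UnitValley.strictValley_of_eq_add (hf : UnitValley f t)
    (hg : ∀ i < t, g (i + 1) = g i) (hk : ∀ i ≤ t, k i = f i + g i) : StrictValley k t := by
  obtain ⟨d, hdt, hdec, hinc⟩ := hf
  refine ⟨d, hdt, fun i hi => ?_, fun i hdi hit => ?_⟩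
  · have := hdec i hi; have := hg i (by omega)
    rw [hk i (by omega), hk (i + 1) (by omega)]; omega
  · have := hinc i hdi hit; have := hg i hit
    rw [hk i (by omega), hk (i + 1) (by omega)]; omega

theorem UnitValley.valley_of_eq_add (hf : UnitValley f t) (hg : UnitValley g t) (C : ℕ)
    (hk : ∀ i ≤ t, k i = f i + g i + C) : Valley k t := by
  obtain ⟨d, hdt, hdec, hinc⟩ := hf
  obtain ⟨e, het, hdec', hinc'⟩ := hg
  refine ⟨max d e, max_le hdt het, fun i hi => ?_, fun i hdi hit => ?_⟩
  · rw [hk i (by omega), hk (i + 1) (by omega)]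
    rcases lt_or_ge i d with hd | hd <;> rcases lt_or_ge i e with he | he
    · have := hdec i hd; have := hdec' i he; omega
    · have := hdec i hd; have := hinc' i he (by omega); omega
    · have := hinc i hd (by omega); have := hdec' i he; omega
    · omega
  · have := hinc i (by omega) hit; have := hinc' i (by omega) hit
    rw [hk i (by omega), hk (i + 1) (by omega)]; omega

end Valley

namespace FreeGroup

variable {α : Type*} [DecidableEq α]

theorem toWord_mk_singleton_mul (L : α × Bool) (g : FreeGroup α) :
    (mk [L] * g).toWord = L :: g.toWord ∨ g.toWord = (L.1, !L.2) :: (mk [L] * g).toWord := by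
  have h : (mk [L] * g).toWord = reduce (L :: g.toWord) := by
    rw [toWord_mul, toWord_mk, reduce_singleton, List.singleton_append]
  rw [h, reduce.cons, reduce_toWord]
  rcases g.toWord with _ | ⟨y, w⟩
  · simp
  · by_cases hc : L.1 = y.1 ∧ L.2 = !y.2
    · right
      obtain ⟨y1, y2⟩ := y
      simp_all
    · simp [hc]

theorem unitValley_norm_of_mk_mul {g : ℕ → FreeGroup α} {L : ℕ → α × Bool} {t : ℕ}
    (hg : ∀ i < t, g (i + 1) = mk [L i] * g i)
    (hL : ∀ i, i + 1 < t → ¬ ((L (i + 1)).1 = (L i).1 ∧ (L (i + 1)).2 = !(L i).2)) :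
    UnitValley (fun i => (g i).norm) t := by
  have hstep : ∀ i < t, (g (i + 1)).toWord = L i :: (g i).toWord ∨
      (g i).toWord = ((L i).1, !(L i).2) :: (g (i + 1)).toWord := fun i hi => by
    rw [hg i hi]; exact toWord_mk_singleton_mul _ _
  have hgrow : ∀ i < t, (g (i + 1)).norm = (g i).norm + 1 →
      (g (i + 1)).toWord = L i :: (g i).toWord := fun i hi hn =>
    (hstep i hi).resolve_right fun h => by simp only [norm, h, List.length_cons] at hn; omega
  refine unitValley_of_step_of_grow (fun i hi => ?_) (fun i hi hn => ?_)
  · rcases hstep i hi with h | h <;> simp [norm, h]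
  · have hw := hgrow i (by omega) hn
    rcases hstep (i + 1) hi with h | h
    · simp [norm, h]
    · rw [hw] at h
      obtain ⟨hLi, -⟩ := List.cons.inj h
      exact absurd ⟨by rw [hLi], by rw [hLi, Bool.not_not]⟩ (hL i hi)

theorem unitValley_norm_of_mul_mk {g : ℕ → FreeGroup α} {L : ℕ → α × Bool} {t : ℕ}
    (hg : ∀ i < t, g (i + 1) = g i * mk [L i])
    (hL : ∀ i, i + 1 < t → ¬ ((L (i + 1)).1 = (L i).1 ∧ (L (i + 1)).2 = !(L i).2)) :
    UnitValley (fun i => (g i).norm) t := by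
  have := unitValley_norm_of_mk_mul (g := fun i => (g i)⁻¹) (L := fun i => ((L i).1, !(L i).2))
    (fun i hi => by simp [hg i hi, inv_mk, invRev]) (fun i hi => by simpa using hL i hi)
  simpa [norm_inv_eq] using this

end FreeGroup

namespace SM

theorem IsReduced.freeGroup_isReduced {Y : Type} {w : Wrd Y} (h : IsReduced w) :
    FreeGroup.IsReduced w :=
  List.IsChain.imp (fun a b hab h1 => by
    cases ha : a.2 <;> cases hb : b.2 <;> simp_all) h

section Tape

variable {Q Y : Type} [Inhabited Q] {M : Machine Q Y}

def AdmWord.tape (W : AdmWord M) (j : ℕ) : FreeGroup Y := FreeGroup.mk (W.tapes.getD j [])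

theorem AdmWord.norm_tape [DecidableEq Y] (W : AdmWord M) (j : ℕ) :
    (W.tape j).norm = (W.tapes.getD j []).length := by
  rw [AdmWord.tape, FreeGroup.norm, FreeGroup.toWord_mk, (W.tred j).freeGroup_isReduced.reduce_eq]

theorem wlen_eq_of_length_eq_three [DecidableEq Y] {W : AdmWord M} (h : W.qs.length = 3) :
    wlen W = (W.tape 0).norm + (W.tape 1).norm + 3 := by
  obtain ⟨a, b, hab⟩ := List.length_eq_two.1 (show W.tapes.length = 2 by have := W.hlen; omega)
  simp only [wlen, alen, h, hab, AdmWord.norm_tape, List.map_cons, List.map_nil, List.sum_cons,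
    List.sum_nil, List.getD_cons_zero, List.getD_cons_succ]
  omega

end Tape

/-- The letter `a_τ^{±1}` that a rule of age (1), (2) or (5) writes immediately to the left of
`q₂`, and a rule of age (6) immediately to its right; an arbitrary letter for the other rules. -/
def tapeLetter : MRul → MY × Bool
  | .ag1 τ b | .ag2 τ b | .ag6 τ b => (.su τ false, !b)
  | .ag5 τ b => (.su τ false, b)
  | _ => (.sa false, true)

theorem tapeLetter_ne_inv {r r' : MRul} (hage : age r' = age r) (hne : r' ≠ minv r) :
    ¬ ((tapeLetter r').1 = (tapeLetter r).1 ∧ (tapeLetter r').2 = !(tapeLetter r).2) := by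
  cases r <;> cases r' <;> simp_all [age, minv, tapeLetter]

theorem mact_k1 (r : MRul) : mact r .k1 = some ([], .k1, []) := by
  cases r <;> rfl

theorem mact_k2 (r : MRul) : mact r .k2 = some ([], .k2, []) := by
  cases r <;> rfl

theorem mact_q2_of_age {r : MRul} {x : MQ} {u v : Wrd MY} {y : MQ}
    (hr : age r = .a1 ∨ age r = .a2 ∨ age r = .a5 ∨ age r = .a6) (hx : isQ2b x)
    (h : mact r x = some (u, y, v)) :
    y = x ∧
      (age r = .a1 ∧ x = .q2Z 1 ∧ u = [tapeLetter r] ∧ v = [] ∨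
       age r = .a2 ∧ x = .q2Z 2 ∧ u = [tapeLetter r] ∧
         v = [((tapeLetter r).1, !(tapeLetter r).2)] ∨
       age r = .a5 ∧ x = .q2Z 5 ∧ u = [tapeLetter r] ∧
         v = [((tapeLetter r).1, !(tapeLetter r).2)] ∨
       age r = .a6 ∧ x = .q2Z 6 ∧ u = [] ∧ v = [tapeLetter r]) := by
  cases r <;> simp only [age, reduceCtorEq, or_false, false_or, or_self] at hr <;>
    rcases x with _|_|_|_|_|_|n <;> simp only [isQ2b, Bool.false_eq_true] at hx <;>
    (try rcases n with _|_|_|_|_|_|_|n) <;>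
    first
      | (rw [show mact _ _ = none from rfl] at h; cases h)
      | (simp only [mact, Option.some.injEq, Prod.mk.injEq] at h
         obtain ⟨rfl, rfl, rfl⟩ := h
         simp [tapeLetter, age])

theorem mact_q2_of_age_one {r : MRul} {x : MQ} {u v : Wrd MY} {y : MQ}
    (hr : age r = .a1 ∨ age r = .a6) (hx : isQ2b x) (hx6 : x ≠ .q2Z 6)
    (h : mact r x = some (u, y, v)) :
    age r = .a1 ∧ y = x ∧ u = [tapeLetter r] ∧ v = [] := by
  obtain ⟨rfl, hcase⟩ := mact_q2_of_age (by tauto) hx h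
  rcases hr with hr | hr <;> simp_all

theorem mact_q2Z_six_of_age {r : MRul} {u v : Wrd MY} {y : MQ}
    (hr : age r = .a1 ∨ age r = .a6) (h : mact r (.q2Z 6) = some (u, y, v)) :
    age r = .a6 ∧ y = .q2Z 6 ∧ u = [] ∧ v = [tapeLetter r] := by
  obtain ⟨rfl, hcase⟩ := mact_q2_of_age (by tauto) rfl h
  rcases hr with hr | hr <;> simp_all

theorem mact_q2_of_age_two {r : MRul} {x : MQ} {u v : Wrd MY} {y : MQ}
    (hr : age r = .a2 ∨ age r = .a5) (hx : isQ2b x) (hx5 : x ≠ .q2Z 5)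
    (h : mact r x = some (u, y, v)) :
    age r = .a2 ∧ y = x ∧ u = [tapeLetter r] ∧
      v = [((tapeLetter r).1, !(tapeLetter r).2)] := by
  obtain ⟨rfl, hcase⟩ := mact_q2_of_age (by tauto) hx h
  rcases hr with hr | hr <;> simp_all

theorem mact_q2Z_five_of_age {r : MRul} {u v : Wrd MY} {y : MQ}
    (hr : age r = .a2 ∨ age r = .a5) (h : mact r (.q2Z 5) = some (u, y, v)) :
    age r = .a5 ∧ y = .q2Z 5 ∧ u = [tapeLetter r] ∧
      v = [((tapeLetter r).1, !(tapeLetter r).2)] := by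
  obtain ⟨rfl, hcase⟩ := mact_q2_of_age (by tauto) rfl h
  rcases hr with hr | hr <;> simp_all

theorem exists_tape_eq_of_step {r : MRul} {x : MQ} {W W' : AdmWord MM}
    (hW : W.qs = [(.k1, true), (x, true), (.k2, true)]) (hs : Step MM (mrule r) W W') :
    ∃ u y v, mact r x = some (u, y, v) ∧ W'.qs = [(.k1, true), (y, true), (.k2, true)] ∧
      W'.tape 0 = W.tape 0 * FreeGroup.mk u ∧ W'.tape 1 = FreeGroup.mk v * W.tape 1 := by
  obtain ⟨hlen, -, hocc, htap⟩ := hs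
  have hlen' : W'.qs.length = 3 := by rw [← hlen, hW]; rfl
  have hk1 : occRepl (mrule r) (qd W.qs 0) = some ([], (.k1, true), []) := by
    simp [qd, hW, occRepl, mrule, mact_k1]
  have hk2 : occRepl (mrule r) (qd W.qs 2) = some ([], (.k2, true), []) := by
    simp [qd, hW, occRepl, mrule, mact_k2]
  have hq0 : qd W'.qs 0 = (.k1, true) := by
    obtain ⟨_, _, h⟩ := hocc 0 (by omega); simp_all
  have hq2 : qd W'.qs 2 = (.k2, true) := by
    obtain ⟨_, _, h⟩ := hocc 2 (by omega); simp_all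
  obtain ⟨u, v, h1⟩ := hocc 1 (by omega)
  obtain ⟨⟨u', y, v'⟩, hm, he⟩ :
      ∃ p, mact r x = some p ∧ (p.1, (p.2.1, true), p.2.2) = (u, qd W'.qs 1, v) := by
    simpa [qd, hW, occRepl, mrule] using h1
  simp only [Prod.mk.injEq] at he
  obtain ⟨rfl, hq1, rfl⟩ := he
  refine ⟨u', y, v', hm, ?_, ?_, ?_⟩
  · obtain ⟨a, b, c, habc⟩ := List.length_eq_three.1 hlen'
    simp_all [qd]
  · have := htap 0 (by omega) [] [] u' v' (by rw [hq0]; exact hk1) h1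
    simpa [AdmWord.tape, FreeGroup.mul_mk] using this
  · have := htap 1 (by omega) u' v' [] [] h1 (by rw [hq2]; exact hk2)
    simpa [AdmWord.tape, FreeGroup.mul_mk] using this

theorem MComp.tape_succ_of_mact (c : MComp) {x : MQ}
    (hq0 : (c.W 0).qs = [(.k1, true), (x, true), (.k2, true)]) {a : Age}
    {U V : MRul → Wrd MY}
    (hact : ∀ i < c.t, ∀ u y v, mact (c.h i) x = some (u, y, v) →
      age (c.h i) = a ∧ y = x ∧ u = U (c.h i) ∧ v = V (c.h i)) :
    (∀ i ≤ c.t, wlen (c.W i) = ((c.W i).tape 0).norm + ((c.W i).tape 1).norm + 3) ∧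
    ∀ i < c.t, age (c.h i) = a ∧
      (c.W (i + 1)).tape 0 = (c.W i).tape 0 * FreeGroup.mk (U (c.h i)) ∧
      (c.W (i + 1)).tape 1 = FreeGroup.mk (V (c.h i)) * (c.W i).tape 1 := by
  have hqs : ∀ i ≤ c.t, (c.W i).qs = [(.k1, true), (x, true), (.k2, true)] := by
    intro i hi
    induction i with
    | zero => exact hq0
    | succ i ih =>
      obtain ⟨u, y, v, hm, hq, -⟩ := exists_tape_eq_of_step (ih (by omega)) (c.steps i (by omega))
      rwa [(hact i (by omega) u y v hm).2.1] at hq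
  refine ⟨fun i hi => wlen_eq_of_length_eq_three (by rw [hqs i hi]; rfl), fun i hi => ?_⟩
  obtain ⟨u, y, v, hm, -, h0, h1⟩ := exists_tape_eq_of_step (hqs i hi.le) (c.steps i hi)
  obtain ⟨ha, -, rfl, rfl⟩ := hact i hi u y v hm
  exact ⟨ha, h0, h1⟩

theorem MComp.tapeLetter_succ_ne_inv (c : MComp) {a : Age} (hage : ∀ i < c.t, age (c.h i) = a)
    (i : ℕ) (hi : i + 1 < c.t) :
    ¬ ((tapeLetter (c.h (i + 1))).1 = (tapeLetter (c.h i)).1 ∧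
      (tapeLetter (c.h (i + 1))).2 = !(tapeLetter (c.h i)).2) :=
  tapeLetter_ne_inv (by rw [hage _ hi, hage i (by omega)]) (c.red i hi)

theorem strictValley_wlen_of_writes_left (c : MComp) {x : MQ}
    (hq0 : (c.W 0).qs = [(.k1, true), (x, true), (.k2, true)]) {a : Age}
    (hact : ∀ i < c.t, ∀ u y v, mact (c.h i) x = some (u, y, v) →
      age (c.h i) = a ∧ y = x ∧ u = [tapeLetter (c.h i)] ∧ v = []) :
    StrictValley (fun i => wlen (c.W i)) c.t := by
  obtain ⟨hwlen, hstep⟩ := c.tape_succ_of_mact (U := fun r => [tapeLetter r]) (V := fun _ => [])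
    hq0 hact
  have hvalley := FreeGroup.unitValley_norm_of_mul_mk (g := fun i => (c.W i).tape 0)
    (L := fun i => tapeLetter (c.h i))
    (fun i hi => (hstep i hi).2.1)
    (c.tapeLetter_succ_ne_inv fun i hi => (hstep i hi).1)
  refine hvalley.strictValley_of_eq_add (g := fun i => ((c.W i).tape 1).norm + 3)
    (fun i hi => ?_) hwlen
  rw [(hstep i hi).2.2, ← FreeGroup.one_eq_mk, one_mul]

theorem strictValley_wlen_of_writes_right (c : MComp) {x : MQ}
    (hq0 : (c.W 0).qs = [(.k1, true), (x, true), (.k2, true)]) {a : Age}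
    (hact : ∀ i < c.t, ∀ u y v, mact (c.h i) x = some (u, y, v) →
      age (c.h i) = a ∧ y = x ∧ u = [] ∧ v = [tapeLetter (c.h i)]) :
    StrictValley (fun i => wlen (c.W i)) c.t := by
  obtain ⟨hwlen, hstep⟩ := c.tape_succ_of_mact (U := fun _ => []) (V := fun r => [tapeLetter r])
    hq0 hact
  have hvalley := FreeGroup.unitValley_norm_of_mk_mul (g := fun i => (c.W i).tape 1)
    (L := fun i => tapeLetter (c.h i))
    (fun i hi => (hstep i hi).2.2) (c.tapeLetter_succ_ne_inv fun i hi => (hstep i hi).1)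
  refine hvalley.strictValley_of_eq_add (g := fun i => ((c.W i).tape 0).norm + 3)
    (fun i hi => ?_) (fun i hi => by rw [hwlen i hi]; omega)
  rw [(hstep i hi).2.1, ← FreeGroup.one_eq_mk, mul_one]

theorem valley_wlen_of_writes_both (c : MComp) {x : MQ}
    (hq0 : (c.W 0).qs = [(.k1, true), (x, true), (.k2, true)]) {a : Age}
    (hact : ∀ i < c.t, ∀ u y v, mact (c.h i) x = some (u, y, v) →
      age (c.h i) = a ∧ y = x ∧ u = [tapeLetter (c.h i)] ∧
        v = [((tapeLetter (c.h i)).1, !(tapeLetter (c.h i)).2)]) :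
    Valley (fun i => wlen (c.W i)) c.t := by
  obtain ⟨hwlen, hstep⟩ := c.tape_succ_of_mact (U := fun r => [tapeLetter r])
    (V := fun r => [((tapeLetter r).1, !(tapeLetter r).2)]) hq0 hact
  have hne := c.tapeLetter_succ_ne_inv fun i hi => (hstep i hi).1
  have hleft := FreeGroup.unitValley_norm_of_mul_mk (g := fun i => (c.W i).tape 0)
    (L := fun i => tapeLetter (c.h i))
    (fun i hi => (hstep i hi).2.1) hne
  have hright := FreeGroup.unitValley_norm_of_mk_mul (g := fun i => (c.W i).tape 1)
    (L := fun i => ((tapeLetter (c.h i)).1, !(tapeLetter (c.h i)).2)) (fun i hi => (hstep i hi).2.2)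
    (fun i hi => by simpa using hne i hi)
  exact hleft.valley_of_eq_add hright 3 hwlen

/-- Lemma 4.1.  For a reduced computation with base
`k₁q₂k₂` whose rules all have age (1) or (6) (resp. (2) or (5)), there is
`d` such that lengths strictly decrease (resp. do not increase) up to `W_d`
and strictly increase (resp. do not decrease) afterwards. -/
theorem statement_7 (c : MComp)
    (hb : ∃ x, isQ2b x ∧ (c.W 0).qs = [(MQ.k1, true), (x, true), (MQ.k2, true)]) :
    ((∀ i < c.t, age (c.h i) = Age.a1 ∨ age (c.h i) = Age.a6) →
      ∃ d, d ≤ c.t ∧ (∀ i < d, wlen (c.W (i + 1)) < wlen (c.W i)) ∧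
        (∀ i, d ≤ i → i < c.t → wlen (c.W i) < wlen (c.W (i + 1)))) ∧
    ((∀ i < c.t, age (c.h i) = Age.a2 ∨ age (c.h i) = Age.a5) →
      ∃ d, d ≤ c.t ∧ (∀ i < d, wlen (c.W (i + 1)) ≤ wlen (c.W i)) ∧
        (∀ i, d ≤ i → i < c.t → wlen (c.W i) ≤ wlen (c.W (i + 1)))) := by
  obtain ⟨x, hx, hq0⟩ := hb
  refine ⟨fun hage => ?_, fun hage => ?_⟩
  · by_cases hx6 : x = .q2Z 6
    · subst hx6
      exact strictValley_wlen_of_writes_right c hq0 fun i hi _ _ _ h =>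
        mact_q2Z_six_of_age (hage i hi) h
    · exact strictValley_wlen_of_writes_left c hq0 fun i hi _ _ _ h =>
        mact_q2_of_age_one (hage i hi) hx hx6 h
  · by_cases hx5 : x = .q2Z 5
    · subst hx5
      exact valley_wlen_of_writes_both c hq0 fun i hi _ _ _ h =>
        mact_q2Z_five_of_age (hage i hi) h
    · exact valley_wlen_of_writes_both c hq0 fun i hi _ _ _ h =>
        mact_q2_of_age_two (hage i hi) hx hx5 h

end SM
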